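/- arXiv:1510.02677 — 4 statements merged into one kernel-verified Lean document; each statement's English description precedes it below -/
import Mathlib

section
/- Andrews' identity for generalized Frobenius partitions: ∑_{k≥0} P_{H_1,H_2}(k) q^k equals the constant term in z of the product (∑_{k,d} P_{H_1}(k,d) q^k (zq)^d) · (∑_{k,d} P_{H_2}(k,d) q^k z^{-d}). -/
/-- `P_H(k,d)`: the number of sequences in `H` of length `d` whose entries sum to `k`. -/
noncomputable def PH (H : Set (List ℕ)) (k d : ℕ) : ℕ :=
  {l : List ℕ | l ∈ H ∧ l.length = d ∧ l.sum = k}.ncard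

/-- `P_{H₁,H₂}(k)`: the number of generalized Frobenius partitions of `k` with top row from
`H₁` and bottom row from `H₂`: pairs of sequences of the same length `d` with
`k = d + ∑ f_i + ∑ g_i`. -/
noncomputable def PHH (H₁ H₂ : Set (List ℕ)) (k : ℕ) : ℕ :=
  {p : List ℕ × List ℕ | p.1 ∈ H₁ ∧ p.2 ∈ H₂ ∧ p.1.length = p.2.length ∧
    k = p.1.length + p.1.sum + p.2.sum}.ncard

/-- The set counted by `PH` is finite. -/
lemma finPH (H : Set (List ℕ)) (d k : ℕ) :
    {l : List ℕ | l ∈ H ∧ l.length = d ∧ l.sum = k}.Finite := by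
  apply Set.Finite.subset (((List.finite_length_eq (Fin (k+1)) d)).image (List.map Fin.val))
  rintro l ⟨-, hlen, hsum⟩
  refine ⟨l.map (fun n => (⟨min n k, by omega⟩ : Fin (k+1))), by simpa using hlen, ?_⟩
  rw [List.map_map]
  conv_rhs => rw [← List.map_id l]
  apply List.map_congr_left
  intro x hx
  have : x ≤ l.sum := List.le_sum_of_mem hx
  simp; omega

/-- The finset counted by `PH`. -/
noncomputable def T (H : Set (List ℕ)) (d k : ℕ) : Finset (List ℕ) :=
  (finPH H d k).toFinset

lemma PH_eq (H : Set (List ℕ)) (k d : ℕ) : PH H k d = (T H d k).card := by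
  rw [PH, Set.ncard_eq_toFinset_card _ (finPH H d k), T]

lemma mem_T {H : Set (List ℕ)} {d k : ℕ} {l : List ℕ} :
    l ∈ T H d k ↔ l ∈ H ∧ l.length = d ∧ l.sum = k := by
  rw [T, Set.Finite.mem_toFinset]; rfl

/-- Andrews' identity: `∑_k P_{H₁,H₂}(k) q^k = [z^0] (∑ P_{H₁}(k,d) q^k (zq)^d)(∑ P_{H₂}(k,d) q^k z^{-d})`,
expressed coefficient-wise in `q`: the constant term in `z` collects, for each `d`, the
products with `q`-exponents `k₁ + d + k₂ = N`. -/
theorem andrews_generalized_frobenius (H₁ H₂ : Set (List ℕ)) (N : ℕ) :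
    PHH H₁ H₂ N =
      ∑ d ∈ Finset.range (N + 1), ∑ k ∈ Finset.range (N + 1 - d),
        PH H₁ k d * PH H₂ (N - d - k) d := by
  classical
  set I : Finset (Σ _ : ℕ, ℕ) :=
    (Finset.range (N + 1)).sigma (fun d => Finset.range (N + 1 - d)) with hI
  set F : (Σ _ : ℕ, ℕ) → Finset (List ℕ × List ℕ) :=
    fun p => (T H₁ p.1 p.2) ×ˢ (T H₂ p.1 (N - p.1 - p.2)) with hF
  have hset : {p : List ℕ × List ℕ | p.1 ∈ H₁ ∧ p.2 ∈ H₂ ∧ p.1.length = p.2.length ∧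
      N = p.1.length + p.1.sum + p.2.sum} = ↑(I.biUnion F) := by
    ext p
    simp only [Set.mem_setOf_eq, Finset.coe_biUnion, Set.mem_iUnion, Finset.mem_coe,
      Finset.mem_biUnion, hF, Finset.mem_product, mem_T, hI, Finset.mem_sigma,
      Finset.mem_range]
    constructor
    · rintro ⟨h1, h2, hlen, hsum⟩
      refine ⟨⟨p.1.length, p.1.sum⟩, ⟨?_, ?_⟩, ⟨h1, rfl, rfl⟩, ⟨h2, hlen.symm, ?_⟩⟩ <;>
        dsimp only <;> omega
    · rintro ⟨⟨d, k⟩, ⟨hd, hk⟩, ⟨h1, hl1, hs1⟩, ⟨h2, hl2, hs2⟩⟩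
      dsimp only at *
      exact ⟨h1, h2, by omega, by omega⟩
  have hdisj : ∀ x ∈ I, ∀ y ∈ I, x ≠ y → Disjoint (F x) (F y) := by
    rintro ⟨d, k⟩ - ⟨d', k'⟩ - hne
    rw [Finset.disjoint_left]
    rintro ⟨a, b⟩ ha hb
    simp only [hF, Finset.mem_product, mem_T] at ha hb
    obtain ⟨⟨-, h1, h2⟩, -⟩ := ha
    obtain ⟨⟨-, h3, h4⟩, -⟩ := hb
    exact hne (by rw [h1.symm.trans h3, h2.symm.trans h4])
  rw [PHH, hset, Set.ncard_coe_finset, Finset.card_biUnion hdisj, hI, Finset.sum_sigma]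
  refine Finset.sum_congr rfl fun d _ => Finset.sum_congr rfl fun k _ => ?_
  rw [hF, Finset.card_product, PH_eq, PH_eq]
end

section
/- Multivariable Andrews identity: ∑_{k} P_{H_1,H_2}(k) q^k equals the constant term in z of (∑_{k,d} P_{H_1}(k,d) z^d q^k) · (∑_{k,d} P_{H_2}(k,d) z^{-d} q^k), where k ranges over vectors of nonnegative integers indexed by a finite color set C and q^k = ∏_{c∈C} q_c^{k_c}. -/
/-- `P_H(k,d)` in the colored setting: the number of `d`-tuples of vectors in `H`
whose column sums equal the vector `k`. -/
noncomputable def PHc {C : Type*} (H : Set (List (C → ℕ))) (k : C → ℕ) (d : ℕ) : ℕ :=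
  {L : List (C → ℕ) | L ∈ H ∧ L.length = d ∧ ∀ c, (L.map fun v => v c).sum = k c}.ncard

/-- `P_{H₁,H₂}(k)`: the number of colored generalized Frobenius partitions of the vector `k`
with top row in `H₁` and bottom row in `H₂`. -/
noncomputable def PHHc {C : Type*} (H₁ H₂ : Set (List (C → ℕ))) (k : C → ℕ) : ℕ :=
  {p : List (C → ℕ) × List (C → ℕ) | p.1 ∈ H₁ ∧ p.2 ∈ H₂ ∧ p.1.length = p.2.length ∧
    ∀ c, (p.1.map fun v => v c).sum + (p.2.map fun v => v c).sum = k c}.ncard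

/-!
A colored F-partition of `k` with `d` columns is a pair of `d`-tuples whose column sums add up to
`k`. Sorting such pairs first by `d` and then by the column sum `j ≤ k` of the top row splits them
into the products of top rows of sum `j` and bottom rows of sum `k - j`; counting each piece gives
the coefficient of `q^k z^0` in the product of the two generating functions.
-/

open Function Set

lemma List.finite_length_eq_of_forall_mem {α : Type*} {s : Set α} (hs : s.Finite) (d : ℕ) :
    {L : List α | L.length = d ∧ ∀ x ∈ L, x ∈ s}.Finite := by
  have := hs.to_subtype
  refine ((List.finite_length_eq s d).image (List.map (↑))).subset ?_
  rintro L ⟨hlen, hmem⟩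
  lift L to List s using hmem
  exact ⟨L, by simpa using hlen, rfl⟩

lemma Summable.hasFiniteSupport_nat {ι : Type*} {f : ι → ℕ} (hf : Summable f) :
    HasFiniteSupport f := by
  have hℤ := (hf.map (Nat.castAddMonoidHom ℤ) continuous_of_discreteTopology
    ).hasFiniteSupport_of_discreteTopology
  rwa [HasFiniteSupport, support_comp_eq _ (by simp)] at hℤ

/-- Unlike `Set.ncard_iUnion_of_finite`, the index type may be infinite: if infinitely many pieces
are nonempty, both sides are junk zeros. -/
lemma Set.ncard_iUnion_eq_tsum {ι α : Type*} {s : ι → Set α} (hfin : ∀ i, (s i).Finite)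
    (hdisj : Pairwise (Disjoint on s)) : (⋃ i, s i).ncard = ∑' i, (s i).ncard := by
  by_cases hsupp : HasFiniteSupport fun i => (s i).ncard
  · have hunion : ⋃ i, s i = ⋃ i ∈ support fun i => (s i).ncard, s i :=
      subset_antisymm (iUnion_subset fun i x hx =>
        mem_biUnion ((ncard_pos (hfin i)).2 ⟨x, hx⟩).ne' hx) (iUnion₂_subset_iUnion _ s)
    rw [tsum_eq_finsum hsupp, hunion,
      hsupp.ncard_biUnion (fun i _ => hfin i) fun i _ j _ hij => hdisj hij, finsum_mem_support]
  · rw [tsum_eq_zero_of_not_summable (mt Summable.hasFiniteSupport_nat hsupp)]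
    -- distinct nonempty pieces are distinct subsets of the union
    refine Infinite.ncard fun hU =>
      hsupp (Finite.of_finite_image (f := s) (hU.finite_subsets.subset ?_) ?_)
    · rintro _ ⟨i, -, rfl⟩
      exact subset_iUnion s i
    · intro i hi j _ hij
      by_contra hne
      obtain ⟨x, hx⟩ := nonempty_of_ncard_ne_zero hi
      exact disjoint_left.1 (hdisj hne) hx (hij ▸ hx)

section Rows

variable {C : Type*}

lemma Set.finite_Iic_pi [Finite C] (k : C → ℕ) : (Iic k).Finite :=
  (Finite.pi fun c => finite_Iic (k c)).subset fun _ hv c _ => hv c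

lemma finite_setOf_length_eq_sum_le [Finite C] (k : C → ℕ) (d : ℕ) :
    {L : List (C → ℕ) | L.length = d ∧ L.sum ≤ k}.Finite := by
  refine (List.finite_length_eq_of_forall_mem (finite_Iic_pi k) d).subset ?_
  rintro L ⟨hlen, hsum⟩
  exact ⟨hlen, fun v hv => (List.le_sum_of_mem hv).trans hsum⟩

def tuplesWithSum (H : Set (List (C → ℕ))) (k : C → ℕ) (d : ℕ) : Set (List (C → ℕ)) :=
  {L | L ∈ H ∧ L.length = d ∧ L.sum = k}

lemma PHc_eq_ncard (H : Set (List (C → ℕ))) (k : C → ℕ) (d : ℕ) :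
    PHc H k d = (tuplesWithSum H k d).ncard := by
  simp only [PHc, tuplesWithSum, funext_iff, Pi.list_sum_apply]

lemma finite_tuplesWithSum [Finite C] (H : Set (List (C → ℕ))) (k : C → ℕ) (d : ℕ) :
    (tuplesWithSum H k d).Finite :=
  (finite_setOf_length_eq_sum_le k d).subset fun _ ⟨_, hlen, hsum⟩ => ⟨hlen, hsum.le⟩

def frobeniusPairs (H₁ H₂ : Set (List (C → ℕ))) (k : C → ℕ) (d : ℕ) :
    Set (List (C → ℕ) × List (C → ℕ)) :=
  {p | p.1 ∈ H₁ ∧ p.2 ∈ H₂ ∧ p.1.length = d ∧ p.2.length = d ∧ p.1.sum + p.2.sum = k}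

lemma PHHc_eq_ncard_iUnion (H₁ H₂ : Set (List (C → ℕ))) (k : C → ℕ) :
    PHHc H₁ H₂ k = (⋃ d, frobeniusPairs H₁ H₂ k d).ncard := by
  rw [PHHc]
  congr 1
  ext ⟨L₁, L₂⟩
  simp only [frobeniusPairs, mem_iUnion, funext_iff, Pi.add_apply, Pi.list_sum_apply]
  constructor
  · rintro ⟨h₁, h₂, hlen, hsum⟩
    exact ⟨_, h₁, h₂, rfl, hlen.symm, hsum⟩
  · rintro ⟨d, h₁, h₂, rfl, hlen, hsum⟩
    exact ⟨h₁, h₂, hlen.symm, hsum⟩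

lemma pairwise_disjoint_frobeniusPairs (H₁ H₂ : Set (List (C → ℕ))) (k : C → ℕ) :
    Pairwise (Disjoint on frobeniusPairs H₁ H₂ k) :=
  fun _ _ hne => disjoint_left.2 fun _ ⟨_, _, hd, _⟩ ⟨_, _, hd', _⟩ => hne (hd.symm.trans hd')

lemma frobeniusPairs_eq_biUnion (H₁ H₂ : Set (List (C → ℕ))) (k : C → ℕ) (d : ℕ) :
    frobeniusPairs H₁ H₂ k d =
      ⋃ j ∈ Iic k, tuplesWithSum H₁ j d ×ˢ tuplesWithSum H₂ (k - j) d := by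
  ext ⟨L₁, L₂⟩
  simp only [frobeniusPairs, tuplesWithSum, mem_iUnion, mem_prod, mem_Iic, exists_prop]
  constructor
  · rintro ⟨h₁, h₂, hlen₁, hlen₂, hsum⟩
    exact ⟨L₁.sum, hsum ▸ le_self_add, ⟨h₁, hlen₁, rfl⟩,
      ⟨h₂, hlen₂, (tsub_eq_of_eq_add_rev hsum.symm).symm⟩⟩
  · rintro ⟨j, hj, ⟨h₁, hlen₁, rfl⟩, ⟨h₂, hlen₂, hsum₂⟩⟩
    exact ⟨h₁, h₂, hlen₁, hlen₂, hsum₂ ▸ add_tsub_cancel_of_le hj⟩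

lemma finite_frobeniusPairs [Finite C] (H₁ H₂ : Set (List (C → ℕ))) (k : C → ℕ) (d : ℕ) :
    (frobeniusPairs H₁ H₂ k d).Finite := by
  rw [frobeniusPairs_eq_biUnion]
  exact (finite_Iic_pi k).biUnion fun j _ =>
    (finite_tuplesWithSum H₁ j d).prod (finite_tuplesWithSum H₂ (k - j) d)

lemma ncard_frobeniusPairs [Fintype C] [DecidableEq C] (H₁ H₂ : Set (List (C → ℕ))) (k : C → ℕ)
    (d : ℕ) :
    (frobeniusPairs H₁ H₂ k d).ncard = ∑ j ∈ Finset.Iic k, PHc H₁ j d * PHc H₂ (k - j) d := by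
  have hdisj : (Iic k).PairwiseDisjoint
      fun j => tuplesWithSum H₁ j d ×ˢ tuplesWithSum H₂ (k - j) d :=
    fun _ _ _ _ hne => disjoint_left.2 fun _ ⟨⟨_, _, hj⟩, _⟩ ⟨⟨_, _, hj'⟩, _⟩ =>
      hne (hj.symm.trans hj')
  rw [frobeniusPairs_eq_biUnion, (finite_Iic_pi k).ncard_biUnion
    (fun j _ => (finite_tuplesWithSum H₁ j d).prod (finite_tuplesWithSum H₂ (k - j) d)) hdisj,
    ← Finset.coe_Iic, finsum_mem_coe_finset]
  simp only [ncard_prod, PHc_eq_ncard]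

end Rows

/-- Multivariable Andrews identity: `∑_k P_{H₁,H₂}(k) q^k` equals the constant term in `z` of
`(∑ P_{H₁}(k,d) z^d q^k)(∑ P_{H₂}(k,d) z^{-d} q^k)`, expressed coefficient-wise in `q`:
for each vector `k`, the coefficient is the sum over `d` of the convolution at `k`. -/
theorem andrews_colored {C : Type*} [Fintype C] [DecidableEq C]
    (H₁ H₂ : Set (List (C → ℕ))) (k : C → ℕ) :
    PHHc H₁ H₂ k =
      ∑' d : ℕ, ∑ k₁ ∈ Finset.Iic k, PHc H₁ k₁ d * PHc H₂ (k - k₁) d := by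
  rw [PHHc_eq_ncard_iUnion, Set.ncard_iUnion_eq_tsum (finite_frobeniusPairs H₁ H₂ k)
    (pairwise_disjoint_frobeniusPairs H₁ H₂ k)]
  exact tsum_congr (ncard_frobeniusPairs H₁ H₂ k)
end

section
/- Jacobi triple product (first form): ∏_{n=1}^∞ (1 + z q^n)(1 + z^{-1} q^{n-1}) = (∏_{n=1}^∞ (1-q^n)^{-1}) · ∑_{j=-∞}^∞ z^j q^{j(j+1)/2}, as formal Laurent series in z over ℚ[[q]]. -/
/-!
Truncate the product to `∏_{m=1}^r (1 + z q^m) ∏_{m=1}^s (1 + z⁻¹ q^{m-1})`. Multiplying in one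
factor at a time gives a q-Pascal recurrence for the coefficients, from which the coefficient of
`z^j` is `q^{j(j+1)/2} (q;q)_{r+s} / ((q;q)_{s+j} (q;q)_{r-j})`, and `0` outside `-s ≤ j ≤ r`.
Take `r = s = B ≥ D + |j|`: modulo `q^{D+1}` the products `(q;q)_{2B}`, `(q;q)_{B±j}` and `(q;q)_B`
all reduce to the same unit `(q;q)_D`, so the coefficient of `q^D` is that of
`q^{j(j+1)/2} / (q;q)_B`.
-/

open PowerSeries

def triangle (j : ℤ) : ℕ := (j * (j + 1) / 2).toNat

theorem triangle_add_one (j : ℤ) : (triangle (j + 1) : ℤ) = triangle j + j + 1 := by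
  have hnonneg : ∀ i : ℤ, 0 ≤ i * (i + 1) / 2 := fun i =>
    Int.ediv_nonneg (by nlinarith [sq_nonneg (2 * i + 1)]) (by norm_num)
  have hstep : (j + 1) * (j + 1 + 1) / 2 = j * (j + 1) / 2 + (j + 1) := by
    rw [show (j + 1) * (j + 1 + 1) = j * (j + 1) + (j + 1) * 2 by ring,
      Int.add_mul_ediv_right _ _ two_ne_zero]
  rw [triangle, triangle, Int.toNat_of_nonneg (hnonneg _), Int.toNat_of_nonneg (hnonneg _), hstep]
  ring

section CommRing

variable {A : Type*} [CommRing A] (q : A)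

def qPochhammer (n : ℕ) : A := ∏ m ∈ Finset.Icc 1 n, (1 - q ^ m)

theorem qPochhammer_succ (n : ℕ) : qPochhammer q (n + 1) = qPochhammer q n * (1 - q ^ (n + 1)) :=
  Finset.prod_Icc_succ_top (by omega) _

theorem pow_succ_dvd_qPochhammer_sub {m n : ℕ} (h : m ≤ n) :
    q ^ (m + 1) ∣ qPochhammer q n - qPochhammer q m := by
  induction n, h using Nat.le_induction with
  | base => simp
  | succ n hmn ih =>
    rw [qPochhammer_succ, show qPochhammer q n * (1 - q ^ (n + 1)) - qPochhammer q m =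
      (qPochhammer q n - qPochhammer q m) - q ^ (n + 1) * qPochhammer q n by ring]
    exact dvd_sub ih (Dvd.dvd.mul_right (pow_dvd_pow q (by omega)) _)

theorem HahnSeries.coeff_mul_one_add_single {Γ : Type*} [PartialOrder Γ] [AddCommGroup Γ]
    [IsOrderedAddMonoid Γ] (x : HahnSeries Γ A) (d j : Γ) (c : A) :
    (x * (1 + HahnSeries.single d c)).coeff j = x.coeff j + x.coeff (j - d) * c := by
  rw [mul_add, mul_one, HahnSeries.coeff_add, HahnSeries.coeff_mul_single]

noncomputable def jacobiProduct (r s : ℕ) : HahnSeries ℤ A :=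
  (∏ m ∈ Finset.Icc 1 r, (1 + HahnSeries.single 1 (q ^ m))) *
    ∏ m ∈ Finset.Icc 1 s, (1 + HahnSeries.single (-1) (q ^ (m - 1)))

theorem jacobiProduct_zero_zero : jacobiProduct q 0 0 = 1 := by
  simp [jacobiProduct]

theorem coeff_jacobiProduct_succ_left (r s : ℕ) (j : ℤ) :
    (jacobiProduct q (r + 1) s).coeff j =
      (jacobiProduct q r s).coeff j + (jacobiProduct q r s).coeff (j - 1) * q ^ (r + 1) := by
  rw [← HahnSeries.coeff_mul_one_add_single, jacobiProduct, jacobiProduct,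
    Finset.prod_Icc_succ_top (by omega), mul_right_comm]

theorem coeff_jacobiProduct_succ_right (r s : ℕ) (j : ℤ) :
    (jacobiProduct q r (s + 1)).coeff j =
      (jacobiProduct q r s).coeff j + (jacobiProduct q r s).coeff (j + 1) * q ^ s := by
  rw [← sub_neg_eq_add j 1, ← HahnSeries.coeff_mul_one_add_single, jacobiProduct, jacobiProduct,
    Finset.prod_Icc_succ_top (by omega), Nat.add_sub_cancel, mul_assoc]

theorem coeff_jacobiProduct_eq_zero (r s : ℕ) {j : ℤ} (h : j < -s ∨ r < j) :
    (jacobiProduct q r s).coeff j = 0 := by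
  induction r generalizing j with
  | zero =>
    induction s generalizing j with
    | zero => rw [jacobiProduct_zero_zero, HahnSeries.coeff_one, if_neg (by omega)]
    | succ s ih =>
      rw [coeff_jacobiProduct_succ_right, ih (by omega), ih (by omega), zero_mul, add_zero]
  | succ r ih =>
    rw [coeff_jacobiProduct_succ_left, ih (by omega), ih (by omega), zero_mul, add_zero]

/-- The coefficient of `z^j` is `q^{j(j+1)/2}` times the Gaussian binomial `[r+s, s+j]_q`, stated
without division and with `a = s + j`, `b = r - j`. -/
def FiniteJacobiIdentity (r s : ℕ) : Prop :=
  ∀ (j : ℤ) (a b : ℕ), (a : ℤ) = s + j → (b : ℤ) = r - j →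
    (jacobiProduct q r s).coeff j * qPochhammer q a * qPochhammer q b =
      q ^ triangle j * qPochhammer q (r + s)

variable {q} {r s : ℕ}

theorem FiniteJacobiIdentity.mul_qPochhammer_succ_left (h : FiniteJacobiIdentity q r s) {j : ℤ}
    {a b : ℕ} (ha : (a : ℤ) = s + j + 1) (hb : (b : ℤ) = r - j) :
    (jacobiProduct q r s).coeff j * qPochhammer q a * qPochhammer q b =
      q ^ triangle j * qPochhammer q (r + s) * (1 - q ^ a) := by
  cases a with
  | zero => rw [coeff_jacobiProduct_eq_zero q r s (by omega)]; simp
  | succ a => rw [qPochhammer_succ, ← h j a b (by omega) hb]; ring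

theorem FiniteJacobiIdentity.mul_qPochhammer_succ_right (h : FiniteJacobiIdentity q r s) {j : ℤ}
    {a b : ℕ} (ha : (a : ℤ) = s + j) (hb : (b : ℤ) = r - j + 1) :
    (jacobiProduct q r s).coeff j * qPochhammer q a * qPochhammer q b =
      q ^ triangle j * qPochhammer q (r + s) * (1 - q ^ b) := by
  cases b with
  | zero => rw [coeff_jacobiProduct_eq_zero q r s (by omega)]; simp
  | succ b => rw [qPochhammer_succ, ← h j a b ha (by omega)]; ring

theorem FiniteJacobiIdentity.succ_left (h : FiniteJacobiIdentity q r s) :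
    FiniteJacobiIdentity q (r + 1) s := by
  intro j a b ha hb
  have hT := triangle_add_one (j - 1)
  rw [sub_add_cancel] at hT
  have hpow : q ^ triangle (j - 1) * q ^ (r + 1) = q ^ triangle j * q ^ b := by
    rw [← pow_add, ← pow_add]
    congr 1
    omega
  rw [coeff_jacobiProduct_succ_left, add_mul, add_mul, h.mul_qPochhammer_succ_right ha (by omega),
    mul_right_comm _ (q ^ (r + 1)), mul_right_comm _ (q ^ (r + 1)),
    h.mul_qPochhammer_succ_left (by omega) (by omega), add_right_comm, qPochhammer_succ,
    show r + s + 1 = a + b by omega, pow_add]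
  linear_combination (qPochhammer q (r + s) * (1 - q ^ a)) * hpow

theorem FiniteJacobiIdentity.succ_right (h : FiniteJacobiIdentity q r s) :
    FiniteJacobiIdentity q r (s + 1) := by
  intro j a b ha hb
  have hT := triangle_add_one j
  have hpow : q ^ triangle (j + 1) * q ^ s = q ^ triangle j * q ^ a := by
    rw [← pow_add, ← pow_add]
    congr 1
    omega
  rw [coeff_jacobiProduct_succ_right, add_mul, add_mul,
    h.mul_qPochhammer_succ_left (by omega) hb, mul_right_comm _ (q ^ s), mul_right_comm _ (q ^ s),
    h.mul_qPochhammer_succ_right (by omega) (by omega), ← add_assoc, qPochhammer_succ,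
    show r + s + 1 = a + b by omega, pow_add]
  linear_combination (qPochhammer q (r + s) * (1 - q ^ b)) * hpow

variable (q) in
theorem finiteJacobiIdentity (r s : ℕ) : FiniteJacobiIdentity q r s := by
  induction r with
  | zero =>
    induction s with
    | zero =>
      intro j a b ha hb
      obtain ⟨rfl, rfl, rfl⟩ : j = 0 ∧ a = 0 ∧ b = 0 := by omega
      simp [jacobiProduct_zero_zero, qPochhammer, triangle]
    | succ s ih => exact ih.succ_right
  | succ r ih => exact ih.succ_left

end CommRing

theorem coeff_eq_of_mul_qPochhammer_eq {R : Type*} [CommRing R] {c g v : R⟦X⟧} {n a b B : ℕ}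
    (ha : n ≤ a) (hb : n ≤ b) (hB : n ≤ B) (hv : v * qPochhammer X B = 1)
    (h : c * qPochhammer X a * qPochhammer X b = g * qPochhammer X (a + b)) :
    coeff n c = coeff n (v * g) := by
  set π := Ideal.Quotient.mk (Ideal.span {(X : R⟦X⟧) ^ (n + 1)})
  have hπ : ∀ {m}, n ≤ m → π (qPochhammer X m) = π (qPochhammer X n) := fun hm =>
    Ideal.Quotient.eq.mpr (Ideal.mem_span_singleton.mpr (pow_succ_dvd_qPochhammer_sub X hm))
  have hv' : π v * π (qPochhammer X n) = 1 := by rw [← hπ hB, ← map_mul, hv, map_one]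
  have h' := congrArg π h
  simp only [map_mul, hπ ha, hπ hb, hπ (show n ≤ a + b by omega)] at h'
  have hπc : π c = π (v * g) := by
    rw [map_mul]
    -- `π v` inverts `π (qPochhammer X n)`, which can therefore be cancelled from `h'`.
    linear_combination (π v * π g - π c * (1 + π v * π (qPochhammer X n))) * hv' + π v ^ 2 * h'
  have hdvd := Ideal.mem_span_singleton.mp (Ideal.Quotient.eq.mp hπc)
  rw [← sub_eq_zero, ← map_sub]
  exact X_pow_dvd_iff.mp hdvd n n.lt_succ_self

/-- Jacobi triple product, first form:
`∏_{n≥1} (1+zq^n)(1+z⁻¹q^{n-1}) = (∏_{n≥1}(1-q^n)⁻¹) ∑_{j∈ℤ} z^j q^{j(j+1)/2}`,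
as formal Laurent series in `z` over `ℚ[[q]]`, expressed coefficient-wise in `z` (via
Hahn series in `z`) and in `q` (via truncations of the infinite products). -/
theorem jacobi_triple_product_first_form (j : ℤ) (D : ℕ) :
    ∃ B0 : ℕ, ∀ B ≥ B0,
      PowerSeries.coeff (R := ℚ) D
        ((∏ m ∈ Finset.Icc 1 B,
            ((1 + HahnSeries.single (1 : ℤ) ((PowerSeries.X : PowerSeries ℚ) ^ m)) *
             (1 + HahnSeries.single (-1 : ℤ) ((PowerSeries.X : PowerSeries ℚ) ^ (m - 1))))).coeff j)
      = PowerSeries.coeff (R := ℚ) D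
          ((∏ m ∈ Finset.Icc 1 B, (1 - (PowerSeries.X : PowerSeries ℚ) ^ m)⁻¹) *
            (PowerSeries.X : PowerSeries ℚ) ^ (j * (j + 1) / 2).toNat) := by
  refine ⟨D + j.natAbs, fun B hB => ?_⟩
  obtain ⟨a, ha⟩ : ∃ a : ℕ, (a : ℤ) = B + j := ⟨(B + j).toNat, by omega⟩
  obtain ⟨b, hb⟩ : ∃ b : ℕ, (b : ℤ) = B - j := ⟨(B - j).toNat, by omega⟩
  have hinv : (∏ m ∈ Finset.Icc 1 B, (1 - X ^ m : ℚ⟦X⟧)⁻¹) * qPochhammer X B = 1 := by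
    rw [qPochhammer, ← Finset.prod_mul_distrib]
    refine Finset.prod_eq_one fun m hm => PowerSeries.inv_mul_cancel _ ?_
    have hm0 : m ≠ 0 := by simp only [Finset.mem_Icc] at hm; omega
    simp [hm0]
  rw [Finset.prod_mul_distrib]
  change coeff D ((jacobiProduct X B B).coeff j) = coeff D (_ * X ^ triangle j)
  refine coeff_eq_of_mul_qPochhammer_eq (a := a) (b := b) (by omega) (by omega) (by omega) hinv ?_
  rw [finiteJacobiIdentity X B B j a b ha hb, show a + b = B + B by omega]
end

section
/- For any modulus n ≥ 2 and a ∈ ℤ/nℤ, the map assigning to a Young diagram Y with d diagonal boxes the colored F-partition whose top row vectors record the color counts of the i-th row segment below and including the main diagonal, and whose bottom row vectors record the color counts of the i-th column segment strictly above the main diagonal (colors given by the diagonal a-coloring), is injective, and the column sums of the resulting colored F-partition equal the weight vector (wt_c(a,Y))_{c∈ℤ/nℤ}. -/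
/-! The cells of `Y` on or right of the diagonal are partitioned into the arms (row `i` from
column `i` on) and those strictly below it into the legs (column `j` from row `j + 1` on), all
indexed by the diagonal boxes; counting cells of colour `c` along this partition gives the column
sums. For injectivity, summing a colour vector over all colours recovers the length of its arm or
leg, and these lengths determine `Y`: for `i ≤ j` the box `(i, j)` lies in `Y` iff `j - i` is
less than the arm length of row `i`, and for `j < i` iff `i - j` is at most the leg length of
column `j`. -/

/-- The number of boxes on the main diagonal of a Young diagram. -/
def diagLen (Y : YoungDiagram) : ℕ := (Y.cells.filter fun s => s.1 = s.2).card

/-- The color-count vector of the `i`-th row segment below and including the main diagonal: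
for each color `c`, the number of boxes `(i,j)` of `Y` with `j ≥ i` whose diagonal
`a`-coloring color `a - i + j` equals `c`. -/
def topVec (n : ℕ) (a : ZMod n) (Y : YoungDiagram) (i : ℕ) : ZMod n → ℕ :=
  fun c => (Y.cells.filter fun s =>
    s.1 = i ∧ i ≤ s.2 ∧ a - (s.1 : ZMod n) + (s.2 : ZMod n) = c).card

/-- The color-count vector of the `i`-th column segment strictly above the main diagonal. -/
def botVec (n : ℕ) (a : ZMod n) (Y : YoungDiagram) (i : ℕ) : ZMod n → ℕ :=
  fun c => (Y.cells.filter fun s =>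
    s.2 = i ∧ i < s.1 ∧ a - (s.1 : ZMod n) + (s.2 : ZMod n) = c).card

/-- The colored F-partition associated to a diagonally `a`-colored Young diagram: the top row
records the color counts of the hook arms (row segments from the diagonal), the bottom row
the color counts of the hook legs (column segments strictly beyond the diagonal). -/
def frobColored (n : ℕ) (a : ZMod n) (Y : YoungDiagram) :
    List (ZMod n → ℕ) × List (ZMod n → ℕ) :=
  ((List.range (diagLen Y)).map (topVec n a Y), (List.range (diagLen Y)).map (botVec n a Y))

open Finset

theorem Finset.card_eq_of_forall_card_filter_eq {α β : Type*} [DecidableEq β] {s t : Finset α}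
    (f : α → β) (h : ∀ b, #(s.filter (f · = b)) = #(t.filter (f · = b))) : #s = #t := by
  classical
  have hs : Set.MapsTo f s ((s ∪ t).image f) := fun x hx =>
    mem_image_of_mem f (mem_union_left t hx)
  have ht : Set.MapsTo f t ((s ∪ t).image f) := fun x hx =>
    mem_image_of_mem f (mem_union_right s hx)
  rw [card_eq_sum_card_fiberwise hs, card_eq_sum_card_fiberwise ht]
  exact sum_congr rfl fun b _ => h b

namespace YoungDiagram

variable (Y : YoungDiagram)

def armCells (i : ℕ) : Finset (ℕ × ℕ) := Y.cells.filter fun s => s.1 = i ∧ i ≤ s.2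

def legCells (j : ℕ) : Finset (ℕ × ℕ) := Y.cells.filter fun s => s.2 = j ∧ j < s.1

theorem mem_diag_iff_lt_diagLen (i : ℕ) : (i, i) ∈ Y ↔ i < diagLen Y := by
  set D := Y.cells.filter fun s => s.1 = s.2
  have hD : diagLen Y = #D := rfl
  rw [hD]
  constructor
  · intro hi
    have hmaps : Set.MapsTo (fun k => (k, k)) (range (i + 1) : Set ℕ) (D : Set (ℕ × ℕ)) :=
      fun k hk =>
        have hki := mem_range_succ_iff.mp hk
        mem_filter.mpr ⟨Y.up_left_mem hki hki hi, rfl⟩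
    simpa using card_le_card_of_injOn _ hmaps fun k _ l _ hkl => (Prod.mk.inj hkl).1
  · intro hi
    by_contra hi'
    have hmaps : Set.MapsTo Prod.fst (D : Set (ℕ × ℕ)) (range i : Set ℕ) := by
      rintro ⟨k, l⟩ hkl
      obtain ⟨hkl, rfl : k = l⟩ := mem_filter.mp hkl
      exact mem_range.mpr (lt_of_not_ge fun hik => hi' (Y.up_left_mem hik hik hkl))
    have hinj : Set.InjOn Prod.fst (D : Set (ℕ × ℕ)) := by
      rintro ⟨k, k'⟩ hk ⟨l, l'⟩ hl (rfl : k = l)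
      simp_all [D]
    exact (card_le_card_of_injOn _ hmaps hinj).not_gt (by rwa [card_range])

theorem card_armCells (i : ℕ) : #(Y.armCells i) = Y.rowLen i - i := by
  have : Y.armCells i =
      (Ico i (Y.rowLen i)).map ⟨(i, ·), fun _ _ h => (Prod.mk.inj h).2⟩ := by
    ext ⟨r, j⟩
    simp only [armCells, mem_filter, mem_cells, mem_map, mem_Ico, mem_iff_lt_rowLen]
    constructor
    · rintro ⟨hj, rfl, hij⟩
      exact ⟨j, ⟨hij, hj⟩, rfl⟩
    · rintro ⟨j, ⟨hij, hj⟩, h⟩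
      obtain ⟨rfl, rfl⟩ := Prod.mk.inj h
      exact ⟨hj, rfl, hij⟩
  rw [this, card_map, Nat.card_Ico]

theorem card_legCells (j : ℕ) : #(Y.legCells j) = Y.colLen j - (j + 1) := by
  have : Y.legCells j =
      (Ico (j + 1) (Y.colLen j)).map ⟨(·, j), fun _ _ h => (Prod.mk.inj h).1⟩ := by
    ext ⟨i, l⟩
    simp only [legCells, mem_filter, mem_cells, mem_map, mem_Ico, mem_iff_lt_colLen]
    constructor
    · rintro ⟨hi, rfl, hji⟩
      exact ⟨i, ⟨hji, hi⟩, rfl⟩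
    · rintro ⟨i, ⟨hji, hi⟩, h⟩
      obtain ⟨rfl, rfl⟩ := Prod.mk.inj h
      exact ⟨hi, rfl, hji⟩
  rw [this, card_map, Nat.card_Ico]

theorem ext_of_card_armCells_of_card_legCells {Y₁ Y₂ : YoungDiagram}
    (harm : ∀ i, #(Y₁.armCells i) = #(Y₂.armCells i))
    (hleg : ∀ j, #(Y₁.legCells j) = #(Y₂.legCells j)) : Y₁ = Y₂ := by
  ext ⟨i, j⟩
  simp only [mem_cells]
  rcases le_or_gt i j with hij | hji
  · have := harm i
    rw [card_armCells, card_armCells] at this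
    rw [mem_iff_lt_rowLen, mem_iff_lt_rowLen]
    omega
  · have := hleg j
    rw [card_legCells, card_legCells] at this
    rw [mem_iff_lt_colLen, mem_iff_lt_colLen]
    omega

variable {Y}

theorem diag_mem_of_mem_armCells {i : ℕ} {s : ℕ × ℕ} (hs : s ∈ Y.armCells i) :
    (i, i) ∈ Y := by
  obtain ⟨hY, rfl, hle⟩ := mem_filter.mp hs
  exact Y.up_left_mem le_rfl hle hY

theorem diag_mem_of_mem_legCells {j : ℕ} {s : ℕ × ℕ} (hs : s ∈ Y.legCells j) :
    (j, j) ∈ Y := by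
  obtain ⟨hY, rfl, hlt⟩ := mem_filter.mp hs
  exact Y.up_left_mem hlt.le le_rfl hY

theorem armCells_eq_empty_of_diagLen_le {i : ℕ} (hi : diagLen Y ≤ i) : Y.armCells i = ∅ :=
  eq_empty_of_forall_notMem fun _ hs =>
    (Y.mem_diag_iff_lt_diagLen i).mp (diag_mem_of_mem_armCells hs) |>.not_ge hi

theorem legCells_eq_empty_of_diagLen_le {j : ℕ} (hj : diagLen Y ≤ j) : Y.legCells j = ∅ :=
  eq_empty_of_forall_notMem fun _ hs =>
    (Y.mem_diag_iff_lt_diagLen j).mp (diag_mem_of_mem_legCells hs) |>.not_ge hj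

variable (Y)

theorem sum_card_filter_armCells (p : ℕ × ℕ → Prop) [DecidablePred p] :
    ∑ i ∈ range (diagLen Y), #((Y.armCells i).filter p) =
      #((Y.cells.filter p).filter fun s => s.1 ≤ s.2) := by
  rw [card_eq_sum_card_fiberwise (f := Prod.fst) fun s hs => ?_]
  · refine sum_congr rfl fun i _ => congrArg card ?_
    ext s
    simp only [armCells, mem_filter]
    grind
  · rw [coe_range, Set.mem_Iio, ← mem_diag_iff_lt_diagLen]
    rw [mem_coe, mem_filter, mem_filter] at hs
    obtain ⟨⟨hs, -⟩, hle⟩ := hs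
    exact Y.up_left_mem le_rfl hle hs

theorem sum_card_filter_legCells (p : ℕ × ℕ → Prop) [DecidablePred p] :
    ∑ j ∈ range (diagLen Y), #((Y.legCells j).filter p) =
      #((Y.cells.filter p).filter fun s => s.2 < s.1) := by
  rw [card_eq_sum_card_fiberwise (f := Prod.snd) fun s hs => ?_]
  · refine sum_congr rfl fun j _ => congrArg card ?_
    ext s
    simp only [legCells, mem_filter]
    grind
  · rw [coe_range, Set.mem_Iio, ← mem_diag_iff_lt_diagLen]
    rw [mem_coe, mem_filter, mem_filter] at hs
    obtain ⟨⟨hs, -⟩, hlt⟩ := hs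
    exact Y.up_left_mem hlt.le le_rfl hs

end YoungDiagram

section Colored

variable (n : ℕ) (a : ZMod n)

theorem topVec_eq_card_filter_armCells (Y : YoungDiagram) (i : ℕ) (c : ZMod n) :
    topVec n a Y i c = #((Y.armCells i).filter fun s => a - (s.1 : ZMod n) + s.2 = c) := by
  simp only [topVec, YoungDiagram.armCells, filter_filter, and_assoc]

theorem botVec_eq_card_filter_legCells (Y : YoungDiagram) (j : ℕ) (c : ZMod n) :
    botVec n a Y j c = #((Y.legCells j).filter fun s => a - (s.1 : ZMod n) + s.2 = c) := by
  simp only [botVec, YoungDiagram.legCells, filter_filter, and_assoc]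

variable {n a}

theorem card_armCells_eq_of_topVec_eq {Y₁ Y₂ : YoungDiagram} {i : ℕ}
    (h : topVec n a Y₁ i = topVec n a Y₂ i) : #(Y₁.armCells i) = #(Y₂.armCells i) :=
  card_eq_of_forall_card_filter_eq (fun s : ℕ × ℕ => a - (s.1 : ZMod n) + s.2) fun c => by
    simpa only [topVec_eq_card_filter_armCells] using congrFun h c

theorem card_legCells_eq_of_botVec_eq {Y₁ Y₂ : YoungDiagram} {j : ℕ}
    (h : botVec n a Y₁ j = botVec n a Y₂ j) : #(Y₁.legCells j) = #(Y₂.legCells j) :=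
  card_eq_of_forall_card_filter_eq (fun s : ℕ × ℕ => a - (s.1 : ZMod n) + s.2) fun c => by
    simpa only [botVec_eq_card_filter_legCells] using congrFun h c

variable (n a)

theorem frobColored_injective : Function.Injective (frobColored n a) := by
  intro Y₁ Y₂ h
  have hd : diagLen Y₁ = diagLen Y₂ := by simpa [frobColored] using congrArg (·.1.length) h
  simp only [frobColored, ← hd, Prod.mk.injEq, List.map_eq_map_iff, List.mem_range] at h
  obtain ⟨htop, hbot⟩ := h
  refine YoungDiagram.ext_of_card_armCells_of_card_legCells (fun i => ?_) (fun j => ?_)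
  · rcases lt_or_ge i (diagLen Y₁) with hi | hi
    · exact card_armCells_eq_of_topVec_eq (htop i hi)
    · rw [YoungDiagram.armCells_eq_empty_of_diagLen_le hi,
        YoungDiagram.armCells_eq_empty_of_diagLen_le (hd ▸ hi)]
  · rcases lt_or_ge j (diagLen Y₁) with hj | hj
    · exact card_legCells_eq_of_botVec_eq (hbot j hj)
    · rw [YoungDiagram.legCells_eq_empty_of_diagLen_le hj,
        YoungDiagram.legCells_eq_empty_of_diagLen_le (hd ▸ hj)]

theorem frobColored_columnSum (Y : YoungDiagram) (c : ZMod n) :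
    ((frobColored n a Y).1.map fun v => v c).sum + ((frobColored n a Y).2.map fun v => v c).sum =
      #(Y.cells.filter fun s => a - (s.1 : ZMod n) + (s.2 : ZMod n) = c) := by
  have htop : ((frobColored n a Y).1.map fun v => v c).sum =
      ∑ i ∈ range (diagLen Y), topVec n a Y i c := by
    simp only [frobColored, List.map_map]; rfl
  have hbot : ((frobColored n a Y).2.map fun v => v c).sum =
      ∑ j ∈ range (diagLen Y), botVec n a Y j c := by
    simp only [frobColored, List.map_map]; rfl
  simp only [htop, hbot, topVec_eq_card_filter_armCells, botVec_eq_card_filter_legCells,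
    Y.sum_card_filter_armCells, Y.sum_card_filter_legCells]
  simpa only [not_le] using card_filter_add_card_filter_not (fun s : ℕ × ℕ => s.1 ≤ s.2)

end Colored

theorem frobColored_injective_and_columnSums_general (n : ℕ) (a : ZMod n) :
    Function.Injective (frobColored n a) ∧
    ∀ (Y : YoungDiagram) (c : ZMod n),
      ((frobColored n a Y).1.map fun v => v c).sum +
        ((frobColored n a Y).2.map fun v => v c).sum =
      (Y.cells.filter fun s => a - (s.1 : ZMod n) + (s.2 : ZMod n) = c).card :=
  ⟨frobColored_injective n a, frobColored_columnSum n a⟩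

/-- The map `Y ↦` colored F-partition is injective, and the column sums of the resulting
colored F-partition equal the weight vector `(wt_c(a,Y))_c`. -/
theorem frobColored_injective_and_columnSums (n : ℕ) [NeZero n] (hn : 2 ≤ n) (a : ZMod n) :
    Function.Injective (frobColored n a) ∧
    ∀ (Y : YoungDiagram) (c : ZMod n),
      ((frobColored n a Y).1.map fun v => v c).sum +
        ((frobColored n a Y).2.map fun v => v c).sum =
      (Y.cells.filter fun s => a - (s.1 : ZMod n) + (s.2 : ZMod n) = c).card :=
  frobColored_injective_and_columnSums_general n a
end
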